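/- arXiv:1702.05306 — 5 statements merged into one kernel-verified Lean document; each statement's English description precedes it below -/
import Mathlib

section
/- Let p, q be coprime positive integers with 1 ≤ q ≤ p/2, and let q' be an integer with 1 ≤ q' ≤ p/2 and q·q' ≡ ±1 (mod p). Then p ≡ ±1 (mod q) if and only if p ≡ ±1 (mod q'). -/
/-!
Since `q q' ≡ ±1 (mod p)`, any `a` with `q a ≡ ±1 (mod p)` satisfies `a ≡ ±q' (mod p)`, so `q'` is
the only such `a` with `1 ≤ a ≤ p/2`. If `p ≡ ±1 (mod q)`, then `(p ∓ 1)/q` (or `1` when `q = 1`) is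
such an `a`, hence `q q' ∈ {1, p - 1, p + 1}`; conversely that forces `p ≡ ±1 (mod q)`. The
condition `q q' ∈ {1, p - 1, p + 1}` is symmetric in `q` and `q'`.
-/

theorem eq_or_eq_neg_of_mul_eq_one_or_neg_one {R : Type*} [CommRing R] {x y z : R}
    (hy : x * y = 1 ∨ x * y = -1) (hz : x * z = 1 ∨ x * z = -1) : z = y ∨ z = -y := by
  rcases hy with hy | hy <;> rcases hz with hz | hz
  · left; linear_combination y * hz - z * hy
  · right; linear_combination y * hz - z * hy
  · right; linear_combination z * hy - y * hz
  · left; linear_combination z * hy - y * hz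

namespace ZMod

theorem eq_of_natCast_eq_or_eq_neg {p b c : ℕ} (hb : 2 * b ≤ p) (hc : 2 * c ≤ p)
    (h : (b : ZMod p) = c ∨ (b : ZMod p) = -c) : b = c := by
  rcases h with h | h
  · rw [natCast_eq_natCast_iff'] at h
    rcases p.eq_zero_or_pos with rfl | hp
    · omega
    · rwa [Nat.mod_eq_of_lt (by omega), Nat.mod_eq_of_lt (by omega)] at h
  · have hdvd : p ∣ b + c := by
      rw [← natCast_eq_zero_iff, Nat.cast_add, h, neg_add_cancel]
    rcases (b + c).eq_zero_or_pos with hbc | hbc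
    · omega
    · have := Nat.le_of_dvd hbc hdvd
      omega

theorem natCast_eq_one_or_neg_one_of_eq {p n : ℕ} (hn : n = 1 ∨ n + 1 = p ∨ n = p + 1) :
    (n : ZMod p) = 1 ∨ (n : ZMod p) = -1 := by
  rcases hn with rfl | rfl | rfl
  · exact .inl Nat.cast_one
  · exact .inr <| eq_neg_of_add_eq_zero_left (by exact_mod_cast natCast_self (n + 1))
  · left; simp

theorem natCast_eq_one_or_neg_one_of_mul_eq {p q r : ℕ}
    (h : q * r = 1 ∨ q * r + 1 = p ∨ q * r = p + 1) : (p : ZMod q) = 1 ∨ (p : ZMod q) = -1 := by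
  rcases h with h | rfl | h
  · obtain rfl : q = 1 := Nat.eq_one_of_mul_eq_one_right h
    exact .inl (Subsingleton.elim _ _)
  · left; simp
  · have : ((p + 1 : ℕ) : ZMod q) = 0 := by rw [← h]; simp
    push_cast at this
    exact .inr (eq_neg_of_add_eq_zero_left this)

theorem exists_mul_eq_of_natCast_eq_one_or_neg_one {p q : ℕ} (hq : 1 ≤ q) (h2q : 2 * q ≤ p)
    (h : (p : ZMod q) = 1 ∨ (p : ZMod q) = -1) :
    ∃ a, 2 * a ≤ p ∧ (q * a = 1 ∨ q * a + 1 = p ∨ q * a = p + 1) := by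
  obtain rfl | hq2 := hq.eq_or_lt
  · exact ⟨1, by omega, .inl rfl⟩
  have hdvd : q ∣ p - 1 ∨ q ∣ p + 1 := by
    rcases h with h | h
    · left
      rw [← natCast_eq_zero_iff, Nat.cast_sub (by omega), h, Nat.cast_one, sub_self]
    · right
      rw [← natCast_eq_zero_iff, Nat.cast_add, h, Nat.cast_one, neg_add_cancel]
  rcases hdvd with ⟨a, ha⟩ | ⟨a, ha⟩
  · have hpa : q * a + 1 = p := by omega
    exact ⟨a, by nlinarith, .inr (.inl hpa)⟩
  · rcases (show q = 2 ∨ 3 ≤ q by omega) with rfl | hq3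
    -- `(p + 1)/2` is too large, but `p` is odd, so `(p - 1)/2` works
    · exact ⟨a - 1, by omega, .inr (.inl (by omega))⟩
    · exact ⟨a, by nlinarith, .inr (.inr ha.symm)⟩

theorem natCast_eq_one_or_neg_one_iff_mul_eq {p q q' : ℕ} (hq : 1 ≤ q) (h2q : 2 * q ≤ p)
    (h2q' : 2 * q' ≤ p) (hdual : (q * q' : ZMod p) = 1 ∨ (q * q' : ZMod p) = -1) :
    ((p : ZMod q) = 1 ∨ (p : ZMod q) = -1) ↔ (q * q' = 1 ∨ q * q' + 1 = p ∨ q * q' = p + 1) := by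
  refine ⟨fun h => ?_, natCast_eq_one_or_neg_one_of_mul_eq⟩
  obtain ⟨a, h2a, ha⟩ := exists_mul_eq_of_natCast_eq_one_or_neg_one hq h2q h
  have hqa : (q * a : ZMod p) = 1 ∨ (q * a : ZMod p) = -1 := by
    exact_mod_cast natCast_eq_one_or_neg_one_of_eq ha
  obtain rfl : a = q' := eq_of_natCast_eq_or_eq_neg h2a h2q'
    (eq_or_eq_neg_of_mul_eq_one_or_neg_one hdual hqa)
  exact ha

end ZMod

theorem cong_pm_one_iff_dual_general (p q q' : ℕ) (hq : 1 ≤ q)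
    (hrange : 2 * q ≤ p) (hq' : 1 ≤ q') (hrange' : 2 * q' ≤ p)
    (hdual : (q * q' : ZMod p) = 1 ∨ (q * q' : ZMod p) = -1) :
    ((p : ZMod q) = 1 ∨ (p : ZMod q) = -1) ↔
      ((p : ZMod q') = 1 ∨ (p : ZMod q') = -1) := by
  have hdual' : (q' * q : ZMod p) = 1 ∨ (q' * q : ZMod p) = -1 := by rwa [mul_comm]
  rw [ZMod.natCast_eq_one_or_neg_one_iff_mul_eq hq hrange hrange' hdual,
    ZMod.natCast_eq_one_or_neg_one_iff_mul_eq hq' hrange' hrange hdual', mul_comm]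

/-- Let `p, q` be coprime positive integers with `1 ≤ q ≤ p/2` and let `q'` satisfy
`1 ≤ q' ≤ p/2` and `q·q' ≡ ±1 (mod p)`.  Then `p ≡ ±1 (mod q)` iff `p ≡ ±1 (mod q')`. -/
theorem cong_pm_one_iff_dual (p q q' : ℕ) (hq : 1 ≤ q) (hcop : Nat.Coprime p q)
    (hrange : 2 * q ≤ p) (hq' : 1 ≤ q') (hrange' : 2 * q' ≤ p)
    (hdual : (q * q' : ZMod p) = 1 ∨ (q * q' : ZMod p) = -1) :
    ((p : ZMod q) = 1 ∨ (p : ZMod q) = -1) ↔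
      ((p : ZMod q') = 1 ∨ (p : ZMod q') = -1) :=
  cong_pm_one_iff_dual_general p q q' hq hrange hq' hrange' hdual
end

section
/- Suppose a group G acts on a (simplicial) tree T without inversion of edges, the action is transitive on vertices and transitive on (geometric) edges, and some element of G swaps the two endpoints of some edge e. Let e' be a half-edge of the barycentric subdivision of T (an edge from a vertex v to the barycenter of e). Then G is isomorphic to the amalgamated free product G_v *_{G_{e,oriented}} G_{e}, where G_v is the stabilizer of the vertex v, G_{e,oriented} is the stabilizer of the ordered edge e, and G_e is the setwise stabilizer of e. -/
/-!
The subgroup `A ⊔ E` generated by `A = Γ_a` and `E = Γ_{a,b}` has an `a`-orbit closed under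
adjacency (edge transitivity, corrected by the swap `σ ∈ E`), so it is all of `Γ` by
connectedness. For injectivity, write an element of the amalgam in normal form `h g₁ ⋯ gₙ` with
`h ∈ C = Γ_a ∩ Γ_b` and letters alternating between `A ∖ C` (fix `a`, move `b`) and `E ∖ C`
(swap `a` and `b`). Multiplying on the right by the letters, the image of the edge `(a, b)` always
points away from `a`, reversed after a letter of `E`; after a letter of `A` this holds because in
a tree a vertex has only one neighbour closer to `a`. So a nonempty word moves `a` or `b` and
cannot lie in `C`.
-/

open Pointwise

namespace SimpleGraph.IsTree

variable {V : Type*} {T : SimpleGraph V}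

theorem eq_of_adj_of_dist_add_one_eq (hT : T.IsTree) (x : V) {u v w : V}
    (hv : T.Adj v u) (hw : T.Adj w u)
    (hdv : T.dist x v + 1 = T.dist x u) (hdw : T.dist x w + 1 = T.dist x u) : v = w := by
  obtain ⟨p, -, hp⟩ := hT.connected.exists_path_of_dist x v
  obtain ⟨q, -, hq⟩ := hT.connected.exists_path_of_dist x w
  have hpu := (p.concat hv).isPath_of_length_eq_dist (by rw [Walk.length_concat, hp, hdv])
  have hqu := (q.concat hw).isPath_of_length_eq_dist (by rw [Walk.length_concat, hq, hdw])
  exact (Walk.concat_inj ((hT.existsUnique_path x u).unique hpu hqu)).1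

theorem dist_eq_add_one_of_adj_of_ne (hT : T.IsTree) (x : V) {u v w : V}
    (hv : T.Adj u v) (hw : T.Adj u w) (hvw : v ≠ w) (hdv : T.dist x v + 1 = T.dist x u) :
    T.dist x w = T.dist x u + 1 :=
  (hT.dist_eq_dist_add_one_of_adj x hw).resolve_left fun hdw =>
    hvw (hT.eq_of_adj_of_dist_add_one_eq x hv.symm hw.symm hdv hdw.symm)

end SimpleGraph.IsTree

theorem Subgroup.IsComplement.eq_one_of_mem_of_mem {G : Type*} [Group G] {S T : Set G}
    (hST : IsComplement S T) (hS : 1 ∈ S) (hT : 1 ∈ T) {g : G} (hgS : g ∈ S) (hgT : g ∈ T) :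
    g = 1 :=
  congrArg Subtype.val <| (hST.equiv_snd_eq_self_of_mem_of_one_mem hS hgT).symm.trans
    (hST.equiv_snd_eq_one_of_mem_of_one_mem hT hgS)

namespace Monoid.PushoutI

variable {ι : Type*} {G : ι → Type*} {H K : Type*} [∀ i, Group (G i)] [Group H] [Group K]
  {φ : ∀ i, H →* G i}

theorem lift_comp_ofCoprodI (f : ∀ i, G i →* K) (k : H →* K)
    (hf : ∀ i, (f i).comp (φ i) = k) :
    (lift f k hf).comp ofCoprodI = CoprodI.lift f :=
  CoprodI.ext_hom _ _ fun i => by ext; simp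

theorem NormalWord.reduced {d : NormalWord.Transversal φ} (w : NormalWord d) :
    Reduced φ w.toWord := by
  rintro ⟨i, g⟩ hg hgφ
  exact w.ne_one _ hg <| (d.compl i).eq_one_of_mem_of_mem (φ i).range.one_mem (d.one_mem i) hgφ
    (w.normalized i g hg)

theorem lift_injective_of_reduced (hφ : ∀ i, Function.Injective (φ i)) (f : ∀ i, G i →* K)
    (k : H →* K) (hf : ∀ i, (f i).comp (φ i) = k) (hk : Function.Injective k)
    (hw : ∀ (h : H) (w : CoprodI.Word G), Reduced φ w → w ≠ .empty →
      k h * CoprodI.lift f w.prod ≠ 1) :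
    Function.Injective (lift f k hf) := by
  classical
  obtain ⟨d⟩ := NormalWord.transversal_nonempty φ hφ
  refine (injective_iff_map_eq_one _).2 fun x hx => ?_
  set w := x • (NormalWord.empty : NormalWord d)
  have hwx : w.prod = x := by simp [w, NormalWord.prod_smul]
  have hlift : lift f k hf x = k w.head * CoprodI.lift f w.toWord.prod := by
    rw [← hwx, NormalWord.prod, map_mul, lift_base, ← lift_comp_ofCoprodI f k hf]
    rfl
  by_cases hempty : w.toWord = .empty
  · have hhead : k w.head = 1 := by simpa [hlift, hempty] using hx
    rw [← hwx, NormalWord.prod, hempty, hk (hhead.trans k.map_one.symm)]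
    simp
  · exact absurd (hlift ▸ hx) (hw w.head w.toWord w.reduced hempty)

end Monoid.PushoutI

namespace MulAction

variable {V Γ : Type*} [Group Γ] [MulAction Γ V]

theorem mem_stabilizer_pair_iff {a b : V} {g : Γ} :
    g ∈ stabilizer Γ ({a, b} : Set V) ↔ g • a = a ∧ g • b = b ∨ g • a = b ∧ g • b = a := by
  rw [mem_stabilizer_iff, Set.smul_set_insert, Set.smul_set_singleton, Set.pair_eq_pair_iff]

/-- The tag `true` stands for the vertex stabilizer `Γ_a`, `false` for the edge stabilizer
`Γ_{a,b}`, as in the indexing of the amalgam. -/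
def IsAmalgamLetter (a b : V) : Bool → Γ → Prop
  | true, g => g • a = a ∧ g • b ≠ b
  | false, g => g • a = b ∧ g • b = a

theorem isAmalgamLetter_of_mem_of_notMem {a b : V} {i : Bool} {g : Γ}
    (hg : g ∈ if i then stabilizer Γ a else stabilizer Γ ({a, b} : Set V))
    (hC : g ∉ stabilizer Γ a ⊓ stabilizer Γ b) : IsAmalgamLetter a b i g := by
  cases i with
  | true => exact ⟨hg, fun hb => hC ⟨hg, hb⟩⟩
  | false => exact (mem_stabilizer_pair_iff.1 hg).resolve_left hC

variable {T : SimpleGraph V} {a b : V}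

theorem dist_prod_smul_of_isAmalgamLetter (hT : T.IsTree)
    (hadj : ∀ (g : Γ) (u v : V), T.Adj u v → T.Adj (g • u) (g • v)) (hab : T.Adj a b)
    (L : List (Bool × Γ)) (hL : L.IsChain fun p q => p.1 ≠ q.1)
    (hlet : ∀ p ∈ L, IsAmalgamLetter a b p.1 p.2) :
    if L.getLast?.map Prod.fst = some false then
      T.dist a ((L.map Prod.snd).prod • a) = T.dist a ((L.map Prod.snd).prod • b) + 1
    else T.dist a ((L.map Prod.snd).prod • b) = T.dist a ((L.map Prod.snd).prod • a) + 1 := by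
  induction L using List.reverseRecOn with
  | nil => simpa using SimpleGraph.dist_eq_one_iff_adj.2 hab
  | append_singleton L p ih =>
    obtain ⟨hchain, -, hlast⟩ := List.isChain_append.1 hL
    specialize ih hchain fun q hq => hlet q (List.mem_append_left _ hq)
    have hp := hlet p (by simp)
    simp only [List.getLast?_append, List.getLast?_singleton, Option.some_or, Option.map_some,
      List.map_append, List.map_singleton, List.prod_append, List.prod_singleton, mul_smul]
    set γ := (L.map Prod.snd).prod
    rcases p with ⟨_ | _, g⟩
    · obtain ⟨hga, hgb⟩ : g • a = b ∧ g • b = a := hp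
      have hprev : L.getLast?.map Prod.fst ≠ some false := by
        intro h
        obtain ⟨q, hq, hqf⟩ := Option.map_eq_some_iff.1 h
        exact hlast q hq _ rfl hqf
      simp only [hprev, if_false] at ih
      simpa [hga, hgb] using ih
    · obtain ⟨hga, hgb⟩ : g • a = a ∧ g • b ≠ b := hp
      have hagb : T.Adj a (g • b) := hga ▸ hadj g a b hab
      simp only [hga, Option.some.injEq, Bool.true_eq_false, if_false]
      rcases hprev : L.getLast? with _ | ⟨q, g'⟩
      · obtain rfl := List.getLast?_eq_none_iff.1 hprev
        simpa [γ] using SimpleGraph.dist_eq_one_iff_adj.2 hagb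
      · obtain rfl : q = false := by simpa using hlast _ hprev _ rfl
        simp only [hprev, Option.map_some, if_true] at ih
        exact hT.dist_eq_add_one_of_adj_of_ne a (hadj γ a b hab) (hadj γ a _ hagb)
          (fun h => hgb (smul_left_cancel γ h).symm) ih.symm

theorem prod_notMem_stabilizer_inf_of_isAmalgamLetter (hT : T.IsTree)
    (hadj : ∀ (g : Γ) (u v : V), T.Adj u v → T.Adj (g • u) (g • v)) (hab : T.Adj a b)
    (L : List (Bool × Γ)) (hne : L ≠ []) (hL : L.IsChain fun p q => p.1 ≠ q.1)
    (hlet : ∀ p ∈ L, IsAmalgamLetter a b p.1 p.2) :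
    (L.map Prod.snd).prod ∉ stabilizer Γ a ⊓ stabilizer Γ b := by
  intro hC
  obtain ⟨ha, hb⟩ := Subgroup.mem_inf.1 hC
  rw [mem_stabilizer_iff] at ha hb
  obtain ⟨L, ⟨_ | _, g⟩, rfl⟩ := L.eq_nil_or_concat.resolve_left hne <;>
    rw [List.concat_eq_append] at hL hlet ha hb
  · have h := dist_prod_smul_of_isAmalgamLetter hT hadj hab _ hL hlet
    simp only [List.getLast?_append, List.getLast?_singleton,
      Option.some_or, Option.map_some, if_true] at h
    rw [ha, hb, SimpleGraph.dist_self, SimpleGraph.dist_eq_one_iff_adj.2 hab] at h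
    omega
  · obtain ⟨hga, hgb⟩ : g • a = a ∧ g • b ≠ b := hlet (true, g) (by simp)
    simp only [List.map_append, List.map_singleton, List.prod_append, List.prod_singleton,
      mul_smul, hga] at ha hb
    rcases hprev : L.getLast? with _ | ⟨q, g'⟩
    · obtain rfl := List.getLast?_eq_none_iff.1 hprev
      exact hgb (by simpa using hb)
    · obtain ⟨hchain, -, hq⟩ := List.isChain_append.1 hL
      obtain rfl : q = false := by simpa using hq _ hprev _ rfl
      have h := dist_prod_smul_of_isAmalgamLetter hT hadj hab L hchain
        fun p hp => hlet p (List.mem_append_left _ hp)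
      simp only [hprev, Option.map_some, if_true, ha, SimpleGraph.dist_self] at h
      omega

theorem exists_mem_sup_smul_eq_of_adj
    (hadj : ∀ (g : Γ) (u v : V), T.Adj u v → T.Adj (g • u) (g • v))
    (hedge : ∀ u v u' v' : V, T.Adj u v → T.Adj u' v' →
      ∃ g : Γ, (g • u = u' ∧ g • v = v') ∨ (g • u = v' ∧ g • v = u'))
    (hab : T.Adj a b) {σ : Γ} (hσ : σ • a = b ∧ σ • b = a)
    {s : Γ} (hs : s ∈ stabilizer Γ a ⊔ stabilizer Γ ({a, b} : Set V)) {v : V}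
    (hv : T.Adj (s • a) v) :
    ∃ t ∈ stabilizer Γ a ⊔ stabilizer Γ ({a, b} : Set V), t • a = v := by
  have hσE : σ ∈ stabilizer Γ ({a, b} : Set V) := mem_stabilizer_pair_iff.2 (Or.inr hσ)
  have hv' : T.Adj a (s⁻¹ • v) := by simpa using hadj s⁻¹ _ _ hv
  obtain ⟨g, ⟨hga, hgb⟩ | ⟨hga, hgb⟩⟩ := hedge a b a (s⁻¹ • v) hab hv'
  · refine ⟨s * g * σ, mul_mem (mul_mem hs (Subgroup.mem_sup_left hga))
      (Subgroup.mem_sup_right hσE), ?_⟩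
    rw [mul_smul, mul_smul, hσ.1, hgb, smul_inv_smul]
  · have hgσ : g * σ ∈ stabilizer Γ a := by
      rw [mem_stabilizer_iff, mul_smul, hσ.1, hgb]
    have hg : g ∈ stabilizer Γ a ⊔ stabilizer Γ ({a, b} : Set V) := by
      simpa using mul_mem (Subgroup.mem_sup_left hgσ) (Subgroup.mem_sup_right (inv_mem hσE))
    exact ⟨s * g, mul_mem hs hg, by rw [mul_smul, hga, smul_inv_smul]⟩

theorem stabilizer_sup_stabilizer_pair_eq_top (hT : T.Connected)
    (hadj : ∀ (g : Γ) (u v : V), T.Adj u v → T.Adj (g • u) (g • v))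
    (hedge : ∀ u v u' v' : V, T.Adj u v → T.Adj u' v' →
      ∃ g : Γ, (g • u = u' ∧ g • v = v') ∨ (g • u = v' ∧ g • v = u'))
    (hab : T.Adj a b) {σ : Γ} (hσ : σ • a = b ∧ σ • b = a) :
    stabilizer Γ a ⊔ stabilizer Γ ({a, b} : Set V) = ⊤ := by
  have horbit (v : V) : ∃ t ∈ stabilizer Γ a ⊔ stabilizer Γ ({a, b} : Set V), t • a = v := by
    induction (SimpleGraph.reachable_iff_reflTransGen a v).1 (hT a v) with
    | refl => exact ⟨1, one_mem _, one_smul Γ a⟩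
    | tail _ huv ih =>
      obtain ⟨t, ht, rfl⟩ := ih
      exact exists_mem_sup_smul_eq_of_adj hadj hedge hab hσ ht huv
  refine eq_top_iff.2 fun g _ => ?_
  obtain ⟨t, ht, hta⟩ := horbit (g • a)
  have htg : t⁻¹ * g ∈ stabilizer Γ a := by rw [mem_stabilizer_iff, mul_smul, ← hta, inv_smul_smul]
  simpa using mul_mem ht (Subgroup.mem_sup_left htg)

end MulAction

open MulAction in
/-- Bass–Serre theory, amalgam case: if a group `Γ` acts on a tree `T`, transitively on
vertices and on geometric edges, and some element swaps the endpoints `a, b` of an edge,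
then `Γ` is the free product of the vertex stabilizer `Γ_a` and the setwise edge
stabilizer `Γ_{a,b}`, amalgamated along the pointwise (ordered-edge) stabilizer
`Γ_a ⊓ Γ_b`. -/
theorem amalgam_of_tree_action {V Γ : Type} [Group Γ] [MulAction Γ V]
    (T : SimpleGraph V) (hT : T.IsTree)
    (hadj : ∀ (g : Γ) (u v : V), T.Adj u v → T.Adj (g • u) (g • v))
    (hedge : ∀ u v u' v' : V, T.Adj u v → T.Adj u' v' →
      ∃ g : Γ, (g • u = u' ∧ g • v = v') ∨ (g • u = v' ∧ g • v = u'))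
    (a b : V) (hab : T.Adj a b)
    (hswap : ∃ g : Γ, g • a = b ∧ g • b = a) :
    Nonempty (Γ ≃* Monoid.PushoutI
      (G := fun i : Bool =>
        ↥(if i then MulAction.stabilizer Γ a else MulAction.stabilizer Γ ({a, b} : Set V)))
      (fun i : Bool =>
        (Subgroup.inclusion (by
          show MulAction.stabilizer Γ a ⊓ MulAction.stabilizer Γ b ≤
            (if i then MulAction.stabilizer Γ a else MulAction.stabilizer Γ ({a, b} : Set V))
          cases i with
          | true => simp only [if_true]; exact inf_le_left
          | false =>
            simp only [Bool.false_eq_true, if_false]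
            intro g hg
            have h1 : g • a = a := hg.1
            have h2 : g • b = b := hg.2
            show g • ({a, b} : Set V) = {a, b}
            rw [Set.smul_set_insert, Set.smul_set_singleton, h1, h2]) :
          ↥(MulAction.stabilizer Γ a ⊓ MulAction.stabilizer Γ b) →*
          ↥(if i then MulAction.stabilizer Γ a
            else MulAction.stabilizer Γ ({a, b} : Set V))))) := by
  obtain ⟨σ, hσ⟩ := hswap
  refine ⟨(MulEquiv.ofBijective (Monoid.PushoutI.lift (fun i => Subgroup.subtype _)
    (Subgroup.subtype _) fun _ => rfl) ⟨?_, ?_⟩).symm⟩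
  · refine Monoid.PushoutI.lift_injective_of_reduced (fun _ => Subgroup.inclusion_injective _)
      _ _ _ (Subgroup.subtype_injective _) fun h w hw hne hprod => ?_
    have hinv : ((w.toList.map fun p => (p.1, (p.2 : Γ))).map Prod.snd).prod = (h : Γ)⁻¹ :=
      Eq.trans (by simp [Monoid.CoprodI.Word.prod, map_list_prod, Function.comp_def])
        (eq_inv_of_mul_eq_one_right hprod)
    refine prod_notMem_stabilizer_inf_of_isAmalgamLetter hT hadj hab _
      (by simpa [Monoid.CoprodI.Word.ext_iff] using hne) (List.isChain_map _ |>.2 w.chain_ne)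
      ?_ (hinv ▸ inv_mem h.2)
    simp only [List.forall_mem_map]
    exact fun p hp => isAmalgamLetter_of_mem_of_notMem p.2.2 fun hC => hw p hp ⟨⟨p.2, hC⟩, rfl⟩
  · rw [← MonoidHom.range_eq_top, eq_top_iff,
      ← stabilizer_sup_stabilizer_pair_eq_top hT.connected hadj hedge hab hσ]
    exact sup_le (fun g hg => ⟨Monoid.PushoutI.of true ⟨g, hg⟩, Monoid.PushoutI.lift_of _ _ _ _⟩)
      (fun g hg => ⟨Monoid.PushoutI.of false ⟨g, hg⟩, Monoid.PushoutI.lift_of _ _ _ _⟩)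
end

section
/- Suppose a group G acts on a tree T without inversion, transitively on vertices and transitively on oriented edges in the sense that there is exactly one orbit of geometric edges and no element of G swaps the endpoints of any edge. Then for a vertex v and an edge e incident to v, G is isomorphic to the HNN extension of the vertex stabilizer G_v over the edge stabilizer G_e. -/
/-!
Choose `s` with `s • w = v`. Conjugation by `s` carries `Γ_v ∩ Γ_w` onto `Γ_v ∩ Γ_{s • v}`, so
sending the stable letter to `s` defines a homomorphism from the HNN extension to `Γ`. Its image
contains `Γ_v` and `s`; by edge transitivity it moves `v` to each neighbour of `v`, hence, the tree
being connected, to every vertex, and so it is all of `Γ`. A reduced word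
`t^u₁ g₁ ⋯ t^uₙ gₙ` traces the walk `v, s^u₁ • v, s^u₁ g₁ s^u₂ • v, …` in the tree. Reducedness
and the absence of inversions forbid this walk to backtrack, so it is a path, and for `n > 0`
it ends away from `v`: the homomorphism is injective.
-/

open SimpleGraph MulAction HNNExtension

theorem SimpleGraph.IsAcyclic.isPath_cons {V : Type*} {G : SimpleGraph V} (hG : G.IsAcyclic)
    {a b c : V} {p : G.Walk a b} (hp : p.IsPath) (h : G.Adj c a) (hc : c ≠ p.snd) :
    (Walk.cons h p).IsPath :=
  (Walk.cons_isPath_iff h p).mpr ⟨hp, fun hmem => hc (hG.eq_snd_of_adj_start hp h.symm hmem)⟩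

theorem HNNExtension.injective_of_reducedWord_prod_ne_one {G H : Type*} [Group G] [Group H]
    {A B : Subgroup G} {φ : A ≃* B} (f : HNNExtension G A B φ →* H)
    (hof : Function.Injective (f.comp of))
    (hred : ∀ w : NormalWord.ReducedWord G A B, w.toList ≠ [] → f (w.prod φ) ≠ 1) :
    Function.Injective f := by
  rw [injective_iff_map_eq_one]
  intro x hx
  obtain ⟨d⟩ := NormalWord.TransversalPair.nonempty G A B
  set w := NormalWord.equiv φ d x
  have hw : w.prod φ = x := (NormalWord.equiv φ d).symm_apply_apply x
  by_cases hl : w.toList = []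
  · have hx' : x = of w.head := by
      rw [← hw, NormalWord.ReducedWord.prod, hl, List.map_nil, List.prod_nil, mul_one]
    rw [hx'] at hx ⊢
    rw [hof (show f.comp of w.head = f.comp of 1 by simpa using hx), map_one]
  · exact absurd (hw ▸ hx) (hred w.toReducedWord hl)

namespace BassSerre

variable {V Γ : Type*} [Group Γ] [MulAction Γ V] {T : SimpleGraph V} {v w : V} {s : Γ}

variable (Γ) in
abbrev edgeStabilizer (v w : V) : Subgroup (stabilizer Γ v) :=
  (stabilizer Γ w).comap (stabilizer Γ v).subtype

theorem mem_edgeStabilizer {g : stabilizer Γ v} : g ∈ edgeStabilizer Γ v w ↔ (g : Γ) • w = w :=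
  Iff.rfl

def edgeStabilizerConj (hs : s • w = v) : edgeStabilizer Γ v w ≃* edgeStabilizer Γ v (s • v) where
  toFun c := ⟨⟨s * c * s⁻¹, by
      simp [mul_smul, inv_smul_eq_iff.mpr hs.symm, mem_edgeStabilizer.mp c.2, hs]⟩,
    mem_edgeStabilizer.mpr <| by simp [mul_smul, mem_stabilizer_iff.mp c.1.2]⟩
  invFun b := ⟨⟨s⁻¹ * b * s, by simp [mul_smul, mem_edgeStabilizer.mp b.2]⟩,
    mem_edgeStabilizer.mpr <| by
      rw [mul_smul, mul_smul, hs, mem_stabilizer_iff.mp b.1.2, inv_smul_eq_iff.mpr hs.symm]⟩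
  left_inv c := by ext; simp [mul_assoc]
  right_inv b := by ext; simp [mul_assoc]
  map_mul' c c' := by ext; push_cast; group

theorem coe_edgeStabilizerConj_apply (hs : s • w = v) (c : edgeStabilizer Γ v w) :
    ((edgeStabilizerConj hs c : stabilizer Γ v) : Γ) = s * c * s⁻¹ :=
  rfl

def hnnHom (hs : s • w = v) :
    HNNExtension (stabilizer Γ v) (edgeStabilizer Γ v w) (edgeStabilizer Γ v (s • v))
      (edgeStabilizerConj hs) →* Γ :=
  lift (stabilizer Γ v).subtype s fun a => by
    rw [Subgroup.coe_subtype, coe_edgeStabilizerConj_apply, inv_mul_cancel_right]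

@[simp]
theorem hnnHom_of (hs : s • w = v) (g : stabilizer Γ v) : hnnHom hs (of g) = g :=
  lift_of ..

@[simp]
theorem hnnHom_t (hs : s • w = v) : hnnHom hs t = s :=
  lift_t ..

theorem hnnHom_reducedWord_prod (hs : s • w = v)
    (r : NormalWord.ReducedWord (stabilizer Γ v) (edgeStabilizer Γ v w)
      (edgeStabilizer Γ v (s • v))) :
    hnnHom hs (r.prod _) = r.head * (r.toList.map fun x => s ^ (x.1 : ℤ) * (x.2 : Γ)).prod := by
  rw [NormalWord.ReducedWord.prod, map_mul, hnnHom_of, map_list_prod, List.map_map]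
  refine congrArg _ (congrArg List.prod (List.map_congr_left fun x _ => ?_))
  rw [Function.comp_apply, map_mul, map_zpow, hnnHom_t, hnnHom_of]

theorem mem_toSubgroup_of_smul_eq (hs : s • w = v) {u : ℤˣ} {g : stabilizer Γ v}
    (hg : (g : Γ) • (s ^ (-(u : ℤ)) • v) = s ^ (-(u : ℤ)) • v) :
    g ∈ toSubgroup (edgeStabilizer Γ v w) (edgeStabilizer Γ v (s • v)) u := by
  rcases Int.units_eq_one_or u with rfl | rfl
  · exact mem_edgeStabilizer.mpr (by simpa [inv_smul_eq_iff.mpr hs.symm] using hg)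
  · exact mem_edgeStabilizer.mpr (by simpa using hg)

theorem eq_top_of_stabilizer_le_of_forall_adj (hconn : T.Preconnected)
    (hadj : ∀ (g : Γ) (u v : V), T.Adj u v → T.Adj (g • u) (g • v)) {H : Subgroup Γ}
    (hstab : stabilizer Γ v ≤ H) (hnbr : ∀ x, T.Adj v x → ∃ h ∈ H, h • v = x) : H = ⊤ := by
  have horbit : ∀ x, ∃ h ∈ H, h • v = x := by
    intro x
    induction (reachable_iff_reflTransGen v x).mp (hconn v x) with
    | refl => exact ⟨1, H.one_mem, one_smul Γ v⟩
    | tail _ hyx ih =>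
      obtain ⟨h, hH, rfl⟩ := ih
      obtain ⟨h', hH', hh'⟩ := hnbr _ (by simpa using hadj h⁻¹ _ _ hyx)
      exact ⟨h * h', H.mul_mem hH hH', by rw [mul_smul, hh', smul_inv_smul]⟩
  refine eq_top_iff.mpr fun g _ => ?_
  obtain ⟨h, hH, hgv⟩ := horbit (g • v)
  have hstab' : h⁻¹ * g ∈ stabilizer Γ v := by
    rw [mem_stabilizer_iff, mul_smul, ← hgv, inv_smul_smul]
  simpa using H.mul_mem hH (hstab hstab')

theorem exists_mem_smul_eq_of_adj
    (hedge : ∀ u v u' v' : V, T.Adj u v → T.Adj u' v' →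
      ∃ g : Γ, (g • u = u' ∧ g • v = v') ∨ (g • u = v' ∧ g • v = u'))
    (hvw : T.Adj v w) (hs : s • w = v) {H : Subgroup Γ} (hstab : stabilizer Γ v ≤ H)
    (hsH : s ∈ H) {x : V} (hx : T.Adj v x) : ∃ h ∈ H, h • v = x := by
  have hsv : s⁻¹ • v = w := inv_smul_eq_iff.mpr hs.symm
  obtain ⟨k, ⟨hkv, hkw⟩ | ⟨hkv, hkw⟩⟩ := hedge v w v x hvw hx
  · exact ⟨k * s⁻¹, H.mul_mem (hstab hkv) (H.inv_mem hsH), by rw [mul_smul, hsv, hkw]⟩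
  · have hks : k * s⁻¹ ∈ stabilizer Γ v := by rw [mem_stabilizer_iff, mul_smul, hsv, hkw]
    exact ⟨k, by simpa using H.mul_mem (hstab hks) hsH, hkv⟩

theorem hnnHom_surjective (hconn : T.Preconnected)
    (hadj : ∀ (g : Γ) (u v : V), T.Adj u v → T.Adj (g • u) (g • v))
    (hedge : ∀ u v u' v' : V, T.Adj u v → T.Adj u' v' →
      ∃ g : Γ, (g • u = u' ∧ g • v = v') ∨ (g • u = v' ∧ g • v = u'))
    (hvw : T.Adj v w) (hs : s • w = v) : Function.Surjective (hnnHom hs) := by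
  have hstab : stabilizer Γ v ≤ (hnnHom hs).range := fun g hg => ⟨of ⟨g, hg⟩, hnnHom_of hs _⟩
  have hsH : s ∈ (hnnHom hs).range := ⟨t, hnnHom_t hs⟩
  exact MonoidHom.range_eq_top.mp <| eq_top_of_stabilizer_le_of_forall_adj hconn hadj hstab
    fun _ => exists_mem_smul_eq_of_adj hedge hvw hs hstab hsH

theorem adj_zpow_smul (hadj : ∀ (g : Γ) (u v : V), T.Adj u v → T.Adj (g • u) (g • v))
    (hsv : T.Adj v (s • v)) (u : ℤˣ) : T.Adj v (s ^ (u : ℤ) • v) := by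
  rcases Int.units_eq_one_or u with rfl | rfl
  · simpa using hsv
  · simpa using (hadj s⁻¹ _ _ hsv).symm

theorem zpow_mul_smul_zpow_smul_ne
    (hadj : ∀ (g : Γ) (u v : V), T.Adj u v → T.Adj (g • u) (g • v))
    (hnoinv : ∀ (g : Γ) (u v : V), T.Adj u v → ¬(g • u = v ∧ g • v = u))
    (hsv : T.Adj v (s • v)) {u u' : ℤˣ} {g : stabilizer Γ v}
    (hg : (g : Γ) • (s ^ (-(u : ℤ)) • v) = s ^ (-(u : ℤ)) • v → u = u') :
    (s ^ (u : ℤ) * g) • (s ^ (u' : ℤ) • v) ≠ v := by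
  intro h
  by_cases hu : u' = u
  · subst u'
    refine hnoinv (s ^ (u : ℤ) * g) v _ (adj_zpow_smul hadj hsv u) ⟨?_, h⟩
    rw [mul_smul, mem_stabilizer_iff.mp g.2]
  · rw [Int.units_ne_iff_eq_neg.mp hu, Units.val_neg, mul_smul, smul_eq_iff_eq_inv_smul,
      ← zpow_neg] at h
    exact hu (hg h).symm

theorem exists_isPath_list_prod_smul (hac : T.IsAcyclic)
    (hadj : ∀ (g : Γ) (u v : V), T.Adj u v → T.Adj (g • u) (g • v))
    (hnoinv : ∀ (g : Γ) (u v : V), T.Adj u v → ¬(g • u = v ∧ g • v = u))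
    (hsv : T.Adj v (s • v)) (l : List (ℤˣ × stabilizer Γ v))
    (hl : l.IsChain fun a b => (a.2 : Γ) • (s ^ (-(a.1 : ℤ)) • v) = s ^ (-(a.1 : ℤ)) • v →
      a.1 = b.1) :
    ∃ p : T.Walk v ((l.map fun x => s ^ (x.1 : ℤ) * (x.2 : Γ)).prod • v),
      p.IsPath ∧ p.length = l.length ∧ ∀ x ∈ l.head?, p.snd = s ^ (x.1 : ℤ) • v := by
  induction l with
  | nil => exact ⟨Walk.nil.copy rfl (by simp), by simp, by simp, by simp⟩
  | cons a l ih =>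
    obtain ⟨q, hq, hqlen, hqsnd⟩ := ih hl.tail
    set h := s ^ (a.1 : ℤ) * (a.2 : Γ)
    have hhv : h • v = s ^ (a.1 : ℤ) • v := by rw [mul_smul, mem_stabilizer_iff.mp a.2.2]
    have hadjv : T.Adj v (h • v) := hhv ▸ adj_zpow_smul hadj hsv a.1
    have hne : v ≠ h • q.snd := by
      cases l with
      | nil =>
        rw [Walk.snd, q.getVert_of_length_le (by simp [hqlen])]
        simpa using hadjv.ne
      | cons b l =>
        rw [hqsnd b rfl]
        exact (zpow_mul_smul_zpow_smul_ne hadj hnoinv hsv (List.isChain_cons_cons.mp hl).1).symm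
    let f : T →g T := ⟨(h • ·), hadj h _ _⟩
    rw [List.map_cons, List.prod_cons, mul_smul]
    refine ⟨.cons hadjv (q.map f), hac.isPath_cons (hq.map (MulAction.injective h)) hadjv ?_,
      by simp [hqlen], by simpa using hhv⟩
    rwa [Walk.snd, Walk.getVert_map]

theorem list_prod_smul_ne_self (hac : T.IsAcyclic)
    (hadj : ∀ (g : Γ) (u v : V), T.Adj u v → T.Adj (g • u) (g • v))
    (hnoinv : ∀ (g : Γ) (u v : V), T.Adj u v → ¬(g • u = v ∧ g • v = u))
    (hsv : T.Adj v (s • v)) {l : List (ℤˣ × stabilizer Γ v)} (hl₀ : l ≠ [])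
    (hl : l.IsChain fun a b => (a.2 : Γ) • (s ^ (-(a.1 : ℤ)) • v) = s ^ (-(a.1 : ℤ)) • v →
      a.1 = b.1) :
    (l.map fun x => s ^ (x.1 : ℤ) * (x.2 : Γ)).prod • v ≠ v := by
  obtain ⟨p, hp, hlen, -⟩ := exists_isPath_list_prod_smul hac hadj hnoinv hsv l hl
  intro heq
  have hnil := Walk.isPath_iff_nil.mp ((Walk.isPath_copy (p := p) rfl heq).mpr hp)
  rw [← Walk.length_eq_zero_iff, Walk.length_copy, hlen] at hnil
  exact hl₀ (List.length_eq_zero_iff.mp hnil)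

theorem hnnHom_injective (hac : T.IsAcyclic)
    (hadj : ∀ (g : Γ) (u v : V), T.Adj u v → T.Adj (g • u) (g • v))
    (hnoinv : ∀ (g : Γ) (u v : V), T.Adj u v → ¬(g • u = v ∧ g • v = u))
    (hvw : T.Adj v w) (hs : s • w = v) : Function.Injective (hnnHom hs) := by
  have hsv : T.Adj v (s • v) := by simpa [hs] using hadj s _ _ hvw.symm
  refine injective_of_reducedWord_prod_ne_one _
    (fun a b hab => Subtype.ext (by simpa only [MonoidHom.comp_apply, hnnHom_of] using hab))
    fun r hr h1 => ?_
  refine list_prod_smul_ne_self hac hadj hnoinv hsv hr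
    (r.chain.imp fun a b hab hfix => hab (mem_toSubgroup_of_smul_eq hs hfix)) ?_
  rw [hnnHom_reducedWord_prod] at h1
  rw [eq_inv_of_mul_eq_one_right h1]
  exact mem_stabilizer_iff.mp (inv_mem r.head.2)

end BassSerre

open BassSerre

/-- Bass–Serre theory, HNN case: if a group `Γ` acts on a tree without inversions,
transitively on vertices, with a single orbit of geometric edges and no element swapping
the endpoints of any edge, then for a vertex `v` and an edge `{v, w}` incident to it,
`Γ` is an HNN extension of the vertex stabilizer `Γ_v` over the edge stabilizer
`Γ_v ∩ Γ_w` (viewed as a subgroup of `Γ_v`). -/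
theorem hnn_of_tree_action {V Γ : Type} [Group Γ] [MulAction Γ V]
    (T : SimpleGraph V) (hT : T.IsTree)
    (hadj : ∀ (g : Γ) (u v : V), T.Adj u v → T.Adj (g • u) (g • v))
    (hnoinv : ∀ (g : Γ) (u v : V), T.Adj u v → ¬(g • u = v ∧ g • v = u))
    (hvert : ∀ u v : V, ∃ g : Γ, g • u = v)
    (hedge : ∀ u v u' v' : V, T.Adj u v → T.Adj u' v' →
      ∃ g : Γ, (g • u = u' ∧ g • v = v') ∨ (g • u = v' ∧ g • v = u'))
    (v w : V) (hvw : T.Adj v w) :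
    ∃ (B : Subgroup ↥(MulAction.stabilizer Γ v))
      (φ : ↥((MulAction.stabilizer Γ w).comap (MulAction.stabilizer Γ v).subtype) ≃* ↥B),
      Nonempty (Γ ≃* HNNExtension ↥(MulAction.stabilizer Γ v)
        ((MulAction.stabilizer Γ w).comap (MulAction.stabilizer Γ v).subtype) B φ) := by
  obtain ⟨s, hs⟩ := hvert w v
  have hbij : Function.Bijective (hnnHom hs) :=
    ⟨hnnHom_injective hT.isAcyclic hadj hnoinv hvw hs,
      hnnHom_surjective hT.connected.preconnected hadj hedge hvw hs⟩
  exact ⟨_, edgeStabilizerConj hs, ⟨(MulEquiv.ofBijective _ hbij).symm⟩⟩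
end

section
/- In the free group F = ⟨x, y⟩, the element w = (x y^5)^4 · x y^4 is a primitive element of F (i.e., is part of a basis of F). -/
/-!
Write `x, y` for the generators and `u = x y⁵`, so that the element is `u⁵ y⁻¹`. Nielsen moves
carry the basis `(x, y)` to `(u, y)`, then to `(y, u)`, then to `(y u⁻⁵, u)` and finally to
`(u⁵ y⁻¹, u)`; each move is precomposition with an explicit automorphism of the free group.
-/

/-- A primitive element of the free group of rank 2: a member of some free basis,
equivalently the image of a generator under an automorphism. -/
def IsPrimitive (w : FreeGroup (Fin 2)) : Prop :=
  ∃ φ : FreeGroup (Fin 2) ≃* FreeGroup (Fin 2), φ (FreeGroup.of 0) = w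

namespace FreeGroup

variable {G : Type*} [Group G]

def IsBasisPair (a b : G) : Prop :=
  Function.Bijective (lift ![a, b])

lemma lift_comp_lift (a b : G) (p q : FreeGroup (Fin 2)) :
    (lift ![a, b]).comp (lift ![p, q]) = lift ![lift ![a, b] p, lift ![a, b] q] := by
  ext i; fin_cases i <;> simp

lemma IsBasisPair.map {a b : G} {p q : FreeGroup (Fin 2)} (hab : IsBasisPair a b)
    (hpq : IsBasisPair p q) : IsBasisPair (lift ![a, b] p) (lift ![a, b] q) := by
  rw [IsBasisPair, ← lift_comp_lift]
  exact hab.comp hpq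

lemma isBasisPair_of_comp_eq_id {p q r s : FreeGroup (Fin 2)}
    (h₁ : (lift ![r, s]).comp (lift ![p, q]) = .id _)
    (h₂ : (lift ![p, q]).comp (lift ![r, s]) = .id _) : IsBasisPair p q :=
  (MonoidHom.toMulEquiv _ _ h₁ h₂).bijective

lemma isBasisPair_generators : IsBasisPair (of 0 : FreeGroup (Fin 2)) (of 1) := by
  have hid : lift ![(of 0 : FreeGroup (Fin 2)), of 1] = .id _ := by
    ext i; fin_cases i <;> rfl
  rw [IsBasisPair, hid]
  exact Function.bijective_id

lemma IsBasisPair.swap {a b : G} (h : IsBasisPair a b) : IsBasisPair b a := by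
  have hinvol : (lift ![(of 1 : FreeGroup (Fin 2)), of 0]).comp (lift ![of 1, of 0]) = .id _ := by
    ext i; fin_cases i <;> simp
  simpa using h.map (isBasisPair_of_comp_eq_id hinvol hinvol)

lemma IsBasisPair.inv_left {a b : G} (h : IsBasisPair a b) : IsBasisPair a⁻¹ b := by
  have hinvol :
      (lift ![(of 0 : FreeGroup (Fin 2))⁻¹, of 1]).comp (lift ![(of 0)⁻¹, of 1]) = .id _ := by
    ext i; fin_cases i <;> simp
  simpa using h.map (isBasisPair_of_comp_eq_id hinvol hinvol)

lemma IsBasisPair.mul_zpow {a b : G} (h : IsBasisPair a b) (n : ℤ) :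
    IsBasisPair (a * b ^ n) b := by
  have htransvection : IsBasisPair (of 0 * of 1 ^ n : FreeGroup (Fin 2)) (of 1) :=
    isBasisPair_of_comp_eq_id (r := of 0 * of 1 ^ (-n)) (s := of 1)
      (by ext i; fin_cases i <;> simp) (by ext i; fin_cases i <;> simp)
  simpa using h.map htransvection

lemma IsBasisPair.isPrimitive {a b : FreeGroup (Fin 2)} (h : IsBasisPair a b) :
    IsPrimitive a :=
  ⟨MulEquiv.ofBijective _ h, lift_apply_of⟩

end FreeGroup

/-- In the free group on `x = of 0`, `y = of 1`, the element `(x y^5)^4 · x y^4` is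
primitive. -/
theorem primitive_xy5_pow4_xy4 :
    IsPrimitive ((FreeGroup.of 0 * FreeGroup.of 1 ^ (5 : ℕ)) ^ (4 : ℕ) *
      FreeGroup.of 0 * (FreeGroup.of 1 : FreeGroup (Fin 2)) ^ (4 : ℕ)) := by
  set x : FreeGroup (Fin 2) := FreeGroup.of 0
  set y : FreeGroup (Fin 2) := FreeGroup.of 1
  have hbasis : FreeGroup.IsBasisPair (y * (x * y ^ (5 : ℤ)) ^ (-5 : ℤ))⁻¹ (x * y ^ (5 : ℤ)) :=
    ((FreeGroup.isBasisPair_generators.mul_zpow 5).swap.mul_zpow (-5)).inv_left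
  have hw : (x * y ^ 5) ^ 4 * x * y ^ 4 = (y * (x * y ^ (5 : ℤ)) ^ (-5 : ℤ))⁻¹ := by
    rw [mul_inv_rev, zpow_neg, inv_inv, show (5 : ℤ) = (4 : ℕ) + 1 by norm_num, zpow_add_one,
      zpow_natCast]
    group
  exact hw ▸ hbasis.isPrimitive
end

section
/- Let p = qm + r with q ≥ 4, 2 ≤ r ≤ q - 2, gcd(p, q) = 1. Consider the set S of integers obtained from the pair (r + q, r) by the following inductive rule generating a binary tree: the root pairs are n_{left} = r + q and n_{right} = r, value of the merge of two adjacent values n₁, n₂ is n₁ + n₂ - q (this is the Stern–Brocot-like mediant construction from the principal complex). Then some value of the form produced by finitely many such operations equals q + 1 or q - 1. -/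
/-- The pairs of adjacent labels in the binary tree generated from the root pair
`(r + q, r)` by the rule that merging adjacent labels `n₁, n₂` produces the new label
`n₁ + n₂ - q`, inserted between them. -/
inductive MediantPairs (q r : ℤ) : ℤ × ℤ → Prop
  | root : MediantPairs q r (r + q, r)
  | left {n₁ n₂ : ℤ} : MediantPairs q r (n₁, n₂) → MediantPairs q r (n₁, n₁ + n₂ - q)
  | right {n₁ n₂ : ℤ} : MediantPairs q r (n₁, n₂) → MediantPairs q r (n₁ + n₂ - q, n₂)

/-!
The labels form an affine image of the Stern–Brocot tree: the vertex with Stern–Brocot vector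
`(a, b)` carries the label `a * r + b * (r - q) + q`, so the roots `(1, 0)`, `(0, 1)` carry
`r + q`, `r`, and mediants of vectors become merges of labels. Every pair of adjacent vectors
with determinant one occurs in the tree, hence every coprime vector of positive integers
occurs as a mediant. Since `r` and `q - r` are coprime, some such vector `(u, v)` satisfies
`u * r - v * (q - r) = 1`, and its label is `q + 1`.
-/

def mediantLabel (q r a b : ℤ) : ℤ := a * r + b * (r - q) + q

lemma mediantLabel_add (q r a b c d : ℤ) :
    mediantLabel q r (a + c) (b + d) = mediantLabel q r a b + mediantLabel q r c d - q := by
  unfold mediantLabel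
  ring

lemma le_and_le_or_le_and_le_of_det_eq_one {a b c d : ℤ} (ha : 0 ≤ a) (hb : 0 ≤ b)
    (hc : 0 ≤ c) (hd : 0 ≤ d) (hdet : a * d - b * c = 1) (hbc : 0 < b + c) :
    (a ≤ c ∧ b ≤ d) ∨ (c ≤ a ∧ d ≤ b) := by
  by_contra! h
  rcases lt_trichotomy a c with hac | rfl | hca
  · nlinarith [h.1 hac.le]
  · linarith [h.1 le_rfl, h.2 le_rfl]
  · nlinarith [h.2 hca.le]

theorem MediantPairs.of_det {q r a b c d : ℤ} (ha : 0 ≤ a) (hb : 0 ≤ b) (hc : 0 ≤ c)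
    (hd : 0 ≤ d) (hdet : a * d - b * c = 1) :
    MediantPairs q r (mediantLabel q r a b, mediantLabel q r c d) := by
  rcases (add_nonneg hb hc).eq_or_lt with hbc | hbc
  · obtain ⟨rfl, rfl⟩ : b = 0 ∧ c = 0 := by omega
    have had : a * d = 1 := by linarith
    obtain ⟨rfl, rfl⟩ : a = 1 ∧ d = 1 :=
      ⟨Int.eq_one_of_mul_eq_one_right ha had, Int.eq_one_of_mul_eq_one_left hd had⟩
    convert MediantPairs.root using 2 <;> simp [mediantLabel, add_comm]
  -- The larger of two adjacent vectors is the mediant of the smaller one and their difference.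
  · rcases le_and_le_or_le_and_le_of_det_eq_one ha hb hc hd hdet hbc with
      ⟨hac, hbd⟩ | ⟨hca, hdb⟩
    · have hab : 0 < a + b := by nlinarith
      have h := (MediantPairs.of_det (q := q) (r := r) ha hb (sub_nonneg.2 hac)
        (sub_nonneg.2 hbd) (by linear_combination hdet)).left
      rwa [← mediantLabel_add, add_sub_cancel, add_sub_cancel] at h
    · have hcd : 0 < c + d := by nlinarith
      have h := (MediantPairs.of_det (q := q) (r := r) (sub_nonneg.2 hca) (sub_nonneg.2 hdb)
        hc hd (by linear_combination hdet)).right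
      rwa [← mediantLabel_add, sub_add_cancel, sub_add_cancel] at h
termination_by (a + b + c + d).toNat
decreasing_by all_goals omega

lemma IsCoprime.exists_mul_sub_mul_eq_one {m n : ℤ} (h : IsCoprime m n) (hn : 0 < n) :
    ∃ x y, 0 < x ∧ x ≤ n ∧ x * m - y * n = 1 := by
  obtain ⟨s, t, hst⟩ := h
  refine ⟨(s - 1) % n + 1, -t - (s - 1) / n * m, ?_, ?_, ?_⟩
  · linarith [Int.emod_nonneg (s - 1) hn.ne']
  · linarith [Int.emod_lt_of_pos (s - 1) hn]
  · linear_combination hst + m * Int.emod_add_mul_ediv (s - 1) n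

lemma IsCoprime.exists_det_eq_one_add_eq {u v : ℤ} (huv : IsCoprime u v) (hu : 0 < u)
    (hv : 0 < v) : ∃ a b c d, 0 ≤ a ∧ 0 ≤ b ∧ 0 ≤ c ∧ 0 ≤ d ∧ a * d - b * c = 1 ∧
      a + c = u ∧ b + d = v := by
  obtain ⟨a, b, ha, hau, hab⟩ := huv.symm.exists_mul_sub_mul_eq_one hu
  have hb : 0 ≤ b := by nlinarith
  have hbv : b < v := by nlinarith
  exact ⟨a, b, u - a, v - b, ha.le, hb, by linarith, by linarith,
    by linear_combination hab, by ring, by ring⟩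

theorem MediantPairs.exists_snd_eq_mediantLabel (q r : ℤ) {u v : ℤ} (huv : IsCoprime u v)
    (hu : 0 < u) (hv : 0 < v) : ∃ n, MediantPairs q r (n, mediantLabel q r u v) := by
  obtain ⟨a, b, c, d, ha, hb, hc, hd, hdet, rfl, rfl⟩ := huv.exists_det_eq_one_add_eq hu hv
  rw [mediantLabel_add]
  exact ⟨_, (MediantPairs.of_det ha hb hc hd hdet).left⟩

lemma IsCoprime.exists_pos_mul_sub_mul_eq_one {r q : ℤ} (hrq : IsCoprime r q) (hr : 2 ≤ r)
    (hrq' : r < q) : ∃ u v, 0 < u ∧ 0 < v ∧ u * r - v * (q - r) = 1 := by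
  have hcop : IsCoprime r (q - r) := by
    simpa [sub_eq_add_neg] using hrq.add_mul_left_right (-1)
  obtain ⟨u, v, hu, -, huv⟩ := hcop.exists_mul_sub_mul_eq_one (by linarith)
  exact ⟨u, v, hu, by nlinarith, huv⟩

theorem mediant_tree_reaches_q_pm_one_general (p q m r : ℤ)
    (hr₁ : 2 ≤ r) (hr₂ : r ≤ q - 2)
    (hp : p = q * m + r) (hcop : IsCoprime p q) :
    ∃ n₁ n₂ : ℤ, MediantPairs q r (n₁, n₂) ∧
      (n₁ = q + 1 ∨ n₁ = q - 1 ∨ n₂ = q + 1 ∨ n₂ = q - 1) := by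
  have hrq : IsCoprime r q := by
    rw [hp, add_comm] at hcop
    exact hcop.of_add_mul_left_left
  obtain ⟨u, v, hu, hv, huv⟩ := hrq.exists_pos_mul_sub_mul_eq_one hr₁ (by linarith)
  obtain ⟨n, hn⟩ := MediantPairs.exists_snd_eq_mediantLabel q r
    ⟨r, r - q, by linear_combination huv⟩ hu hv
  have hlabel : mediantLabel q r u v = q + 1 := by
    unfold mediantLabel
    linear_combination huv
  exact ⟨n, q + 1, hlabel ▸ hn, by simp⟩

/-- Let `p = q m + r` with `q ≥ 4`, `2 ≤ r ≤ q - 2` and `gcd(p, q) = 1`.  Then the tree of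
labels generated from the pair `(r + q, r)` by the mediant-minus-`q` rule contains a label
equal to `q + 1` or `q - 1`. -/
theorem mediant_tree_reaches_q_pm_one (p q m r : ℤ)
    (hq : 4 ≤ q) (hr₁ : 2 ≤ r) (hr₂ : r ≤ q - 2)
    (hp : p = q * m + r) (hcop : IsCoprime p q) :
    ∃ n₁ n₂ : ℤ, MediantPairs q r (n₁, n₂) ∧
      (n₁ = q + 1 ∨ n₁ = q - 1 ∨ n₂ = q + 1 ∨ n₂ = q - 1) :=
  mediant_tree_reaches_q_pm_one_general p q m r hr₁ hr₂ hp hcop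
end
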